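/- Let X^n, Y^n, E^n be sequences of finite-valued random variables such that the pairs (X_t, E_t) are i.i.d. across t, with X_t independent of E_t. Then (1/n) I(X^n; Y^n | E^n) ≥ (1/n) Σ_{t=1}^n I(X_t; Y_t | E_t). -/

import Mathlib

/-!
Write `I(Xⁿ;Yⁿ|Eⁿ) = H(Xⁿ|Eⁿ) - H(Xⁿ|Yⁿ,Eⁿ)`. Independence of the pairs `(X_t,E_t)` gives
`H(Xⁿ,Eⁿ) = ∑ H(X_t,E_t)`, while `H(Eⁿ) ≤ ∑ H(E_t)` by subadditivity, so
`H(Xⁿ|Eⁿ) ≥ ∑ H(X_t|E_t)`. On the other side `H(Xⁿ|Yⁿ,Eⁿ) ≤ ∑ H(X_t|Yⁿ,Eⁿ) ≤ ∑ H(X_t|Y_t,E_t)`,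
by subadditivity of conditional entropy and because conditioning on less cannot decrease
entropy. Both facts reduce to `I(X;Y|E) ≥ 0`, which is Gibbs' inequality comparing the joint
law of `(X,Y,E)` with `p(x,e) p(y,e) / p(e)`.
-/

open Finset Real

noncomputable section

/-- `w` is a probability mass function on the finite sample space `Ω`. -/
def IsPMF {Ω : Type*} [Fintype Ω] (w : Ω → ℝ) : Prop :=
  (∀ ω, 0 ≤ w ω) ∧ ∑ ω, w ω = 1

/-- Distribution (pmf) of the random variable `X` under the weight `w`. -/
def rvDist {Ω A : Type*} [Fintype Ω] [DecidableEq A] (w : Ω → ℝ) (X : Ω → A) (a : A) : ℝ :=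
  ∑ ω, if X ω = a then w ω else 0

/-- Shannon entropy (in bits) of `X` under `w`. -/
def Hent {Ω A : Type*} [Fintype Ω] [Fintype A] [DecidableEq A] (w : Ω → ℝ) (X : Ω → A) : ℝ :=
  -∑ a, rvDist w X a * Real.logb 2 (rvDist w X a)

/-- Conditional entropy `H(X | Z)` (in bits). -/
def Hcond {Ω A C : Type*} [Fintype Ω] [Fintype A] [Fintype C] [DecidableEq A] [DecidableEq C]
    (w : Ω → ℝ) (X : Ω → A) (Z : Ω → C) : ℝ :=
  Hent w (fun ω => (X ω, Z ω)) - Hent w Z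

/-- Mutual information `I(X;Y)` (in bits). -/
def MI {Ω A B : Type*} [Fintype Ω] [Fintype A] [Fintype B] [DecidableEq A] [DecidableEq B]
    (w : Ω → ℝ) (X : Ω → A) (Y : Ω → B) : ℝ :=
  Hent w X + Hent w Y - Hent w (fun ω => (X ω, Y ω))

/-- Conditional mutual information `I(X;Y|E)` (in bits). -/
def CMI {Ω A B C : Type*} [Fintype Ω] [Fintype A] [Fintype B] [Fintype C]
    [DecidableEq A] [DecidableEq B] [DecidableEq C]
    (w : Ω → ℝ) (X : Ω → A) (Y : Ω → B) (E : Ω → C) : ℝ :=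
  Hent w (fun ω => (X ω, E ω)) + Hent w (fun ω => (Y ω, E ω))
    - Hent w (fun ω => (X ω, Y ω, E ω)) - Hent w E

/-- `X` and `E` are independent under `w`. -/
def IndepRV {Ω A C : Type*} [Fintype Ω] [DecidableEq A] [DecidableEq C]
    (w : Ω → ℝ) (X : Ω → A) (E : Ω → C) : Prop :=
  ∀ a c, rvDist w (fun ω => (X ω, E ω)) (a, c) = rvDist w X a * rvDist w E c

/-- The family `X` is i.i.d. under `w`: the joint pmf factorizes into the (common) marginals. -/
def IIDFamily {Ω A : Type*} [Fintype Ω] [DecidableEq A] {n : ℕ}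
    (w : Ω → ℝ) (X : Fin n → Ω → A) : Prop :=
  (∀ v : Fin n → A, rvDist w (fun ω t => X t ω) v = ∏ t, rvDist w (X t) (v t)) ∧
  (∀ s t, rvDist w (X s) = rvDist w (X t))

section Distribution

variable {Ω D D' : Type*} [Fintype Ω] [DecidableEq D] [DecidableEq D'] (w : Ω → ℝ)

lemma rvDist_nonneg (hw : ∀ ω, 0 ≤ w ω) (V : Ω → D) (d : D) : 0 ≤ rvDist w V d :=
  Finset.sum_nonneg fun ω _ => by split_ifs <;> simp [hw ω]

lemma rvDist_le_rvDist_comp (hw : ∀ ω, 0 ≤ w ω) (V : Ω → D) (f : D → D') (d : D) :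
    rvDist w V d ≤ rvDist w (fun ω => f (V ω)) (f d) :=
  Finset.sum_le_sum fun ω _ => by split_ifs <;> simp_all

lemma rvDist_comp_of_injective (V : Ω → D) {f : D → D'} (hf : f.Injective) (d : D) :
    rvDist w (fun ω => f (V ω)) (f d) = rvDist w V d := by
  simp only [rvDist, hf.eq_iff]

lemma sum_rvDist_mul [Fintype D] (V : Ω → D) (g : D → ℝ) :
    ∑ d, rvDist w V d * g d = ∑ ω, w ω * g (V ω) := by
  simp only [rvDist, Finset.sum_mul, ite_mul, zero_mul]
  rw [Finset.sum_comm]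
  exact Finset.sum_congr rfl fun ω _ => by simp

lemma sum_rvDist [Fintype D] (V : Ω → D) : ∑ d, rvDist w V d = ∑ ω, w ω := by
  simpa using sum_rvDist_mul w V 1

lemma sum_rvDist_prod_left {A : Type*} [Fintype A] [DecidableEq A] (U : Ω → A) (V : Ω → D)
    (d : D) : ∑ a, rvDist w (fun ω => (U ω, V ω)) (a, d) = rvDist w V d := by
  simp only [rvDist, Prod.ext_iff, ite_and]
  rw [Finset.sum_comm]
  exact Finset.sum_congr rfl fun ω _ => by simp

end Distribution

section Entropy

variable {Ω D D' : Type*} [Fintype Ω] [Fintype D] [Fintype D'] [DecidableEq D] [DecidableEq D']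
  (w : Ω → ℝ)

lemma Hent_comp_eq_sum (V : Ω → D) (f : D → D') :
    Hent w (fun ω => f (V ω)) =
      -∑ d, rvDist w V d * logb 2 (rvDist w (fun ω => f (V ω)) (f d)) := by
  rw [Hent, sum_rvDist_mul, sum_rvDist_mul w V]

lemma Hent_comp_of_injective (V : Ω → D) {f : D → D'} (hf : f.Injective) :
    Hent w (fun ω => f (V ω)) = Hent w V := by
  rw [Hent_comp_eq_sum]
  simp only [rvDist_comp_of_injective w V hf]
  rfl

lemma Hent_pi_eq_sum {ι : Type*} [Fintype ι] [DecidableEq ι] (X : ι → Ω → D)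
    (hX : ∀ v : ι → D, rvDist w (fun ω i => X i ω) v = ∏ i, rvDist w (X i) (v i)) :
    Hent w (fun ω i => X i ω) = ∑ i, Hent w (X i) := by
  have hlog : ∀ v : ι → D,
      rvDist w (fun ω i => X i ω) v * logb 2 (rvDist w (fun ω i => X i ω) v) =
        ∑ i, rvDist w (fun ω i => X i ω) v * logb 2 (rvDist w (X i) (v i)) := by
    intro v
    rw [← Finset.mul_sum]
    by_cases h0 : rvDist w (fun ω i => X i ω) v = 0
    · simp [h0]
    · rw [hX v] at h0 ⊢
      rw [logb_prod _ _ fun i _ => Finset.prod_ne_zero_iff.mp h0 i (Finset.mem_univ i)]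
  have hcoord : ∀ i, Hent w (X i) =
      -∑ v, rvDist w (fun ω i => X i ω) v * logb 2 (rvDist w (X i) (v i)) := fun i =>
    Hent_comp_eq_sum w (fun ω i => X i ω) (fun v => v i)
  rw [Hent, Finset.sum_congr rfl fun v _ => hlog v, Finset.sum_comm, ← Finset.sum_neg_distrib]
  exact Finset.sum_congr rfl fun i _ => (hcoord i).symm

end Entropy

lemma sum_mul_logb_le_sum_mul_logb {ι : Type*} [Fintype ι] {a b : ι → ℝ} (ha : ∀ i, 0 ≤ a i)
    (hb : ∀ i, 0 ≤ b i) (hab : ∀ i, a i ≠ 0 → 0 < b i) (hsum : ∑ i, b i ≤ ∑ i, a i) :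
    ∑ i, a i * logb 2 (b i) ≤ ∑ i, a i * logb 2 (a i) := by
  have hterm : ∀ i, a i * log (b i) ≤ a i * log (a i) + (b i - a i) := by
    intro i
    rcases (ha i).eq_or_lt with h | h
    · simp [← h, hb i]
    · have hbi := hab i h.ne'
      have := mul_le_mul_of_nonneg_left (log_le_sub_one_of_pos (div_pos hbi h)) h.le
      rw [log_div hbi.ne' h.ne', mul_sub, mul_sub, mul_one, mul_div_cancel₀ _ h.ne'] at this
      linarith
  have hlog : ∑ i, a i * log (b i) ≤ ∑ i, a i * log (a i) := by
    have := Finset.sum_le_sum fun i (_ : i ∈ univ) => hterm i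
    rw [Finset.sum_add_distrib, Finset.sum_sub_distrib] at this
    linarith
  simp only [logb, mul_div_assoc', ← Finset.sum_div]
  exact div_le_div_of_nonneg_right hlog (log_nonneg one_le_two)

section MutualInformation

variable {Ω A B C : Type*} [Fintype Ω] [Fintype A] [Fintype B] [Fintype C]
  [DecidableEq A] [DecidableEq B] [DecidableEq C] (w : Ω → ℝ)

lemma CMI_nonneg (hw : ∀ ω, 0 ≤ w ω) (X : Ω → A) (Y : Ω → B) (E : Ω → C) :
    0 ≤ CMI w X Y E := by
  set V := fun ω => (X ω, Y ω, E ω)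
  set P := rvDist w V
  set pXE := rvDist w (fun ω => (X ω, E ω))
  set pYE := rvDist w (fun ω => (Y ω, E ω))
  set pE := rvDist w E
  set b : A × B × C → ℝ := fun i => pXE (i.1, i.2.2) * pYE i.2 / pE i.2.2
  have hXE : Hent w (fun ω => (X ω, E ω)) = -∑ i, P i * logb 2 (pXE (i.1, i.2.2)) :=
    Hent_comp_eq_sum w V (fun i => (i.1, i.2.2))
  have hYE : Hent w (fun ω => (Y ω, E ω)) = -∑ i, P i * logb 2 (pYE i.2) :=
    Hent_comp_eq_sum w V (fun i => i.2)
  have hE : Hent w E = -∑ i, P i * logb 2 (pE i.2.2) :=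
    Hent_comp_eq_sum w V (fun i => i.2.2)
  have hXYE : Hent w V = -∑ i, P i * logb 2 (P i) := rfl
  have hmarg : ∀ i, P i ≠ 0 → 0 < pXE (i.1, i.2.2) ∧ 0 < pYE i.2 ∧ 0 < pE i.2.2 := by
    intro i hi
    have hP : 0 < P i := (rvDist_nonneg w hw V i).lt_of_ne' hi
    exact ⟨hP.trans_le (rvDist_le_rvDist_comp w hw V (fun i => (i.1, i.2.2)) i),
      hP.trans_le (rvDist_le_rvDist_comp w hw V (fun i => i.2) i),
      hP.trans_le (rvDist_le_rvDist_comp w hw V (fun i => i.2.2) i)⟩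
  have hb_sum : ∑ i, b i = ∑ i, P i := calc
    ∑ i, b i = ∑ z, (∑ x, pXE (x, z)) * (∑ y, pYE (y, z)) / pE z := by
      simp only [b, Finset.sum_mul_sum, Finset.sum_div, Fintype.sum_prod_type]
      exact (Finset.sum_congr rfl fun _ _ => Finset.sum_comm).trans Finset.sum_comm
    _ = ∑ z, pE z := by simp only [pXE, pYE, pE, sum_rvDist_prod_left, mul_self_div_self]
    _ = ∑ i, P i := by rw [sum_rvDist, sum_rvDist]
  have hsplit : ∑ i, P i * logb 2 (b i) = ∑ i, P i * logb 2 (pXE (i.1, i.2.2))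
      + ∑ i, P i * logb 2 (pYE i.2) - ∑ i, P i * logb 2 (pE i.2.2) := by
    rw [← Finset.sum_add_distrib, ← Finset.sum_sub_distrib]
    refine Finset.sum_congr rfl fun i _ => ?_
    by_cases hi : P i = 0
    · simp [hi]
    obtain ⟨h₁, h₂, h₃⟩ := hmarg i hi
    rw [logb_div (mul_pos h₁ h₂).ne' h₃.ne', logb_mul h₁.ne' h₂.ne']
    ring
  have hgibbs := sum_mul_logb_le_sum_mul_logb (fun i => rvDist_nonneg w hw V i)
    (fun i => div_nonneg (mul_nonneg (rvDist_nonneg w hw _ _) (rvDist_nonneg w hw _ _))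
      (rvDist_nonneg w hw _ _))
    (fun i hi => by obtain ⟨h₁, h₂, h₃⟩ := hmarg i hi; positivity) hb_sum.le
  rw [CMI, hXE, hYE, hXYE, hE]
  linarith

end MutualInformation

section ConditionalEntropy

variable {Ω A B C : Type*} [Fintype Ω] [Fintype A] [Fintype B] [Fintype C]
  [DecidableEq A] [DecidableEq B] [DecidableEq C] (w : Ω → ℝ)

lemma CMI_eq_Hcond_sub_Hcond (X : Ω → A) (Y : Ω → B) (E : Ω → C) :
    CMI w X Y E = Hcond w X E - Hcond w X (fun ω => (Y ω, E ω)) := by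
  rw [CMI, Hcond, Hcond]
  ring

lemma Hcond_const (a : A) (Z : Ω → C) : Hcond w (fun _ => a) Z = 0 := by
  have h : Hent w (fun ω => (a, Z ω)) = Hent w Z :=
    Hent_comp_of_injective w Z (f := fun z => (a, z)) (Function.LeftInverse.injective
      (g := Prod.snd) fun _ => rfl)
  rw [Hcond, h, sub_self]

lemma Hcond_unit (hw : ∑ ω, w ω = 1) (X : Ω → A) : Hcond w X (fun _ => ()) = Hent w X := by
  have h : Hent w (fun ω => (X ω, ())) = Hent w X :=
    Hent_comp_of_injective w X (f := fun x => (x, ())) (Function.LeftInverse.injective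
      (g := Prod.fst) fun _ => rfl)
  rw [Hcond, h]
  simp [Hent, rvDist, hw]

lemma Hcond_comp_of_injective (X : Ω → A) (Z : Ω → C) {f : A → B} (hf : f.Injective) :
    Hcond w (fun ω => f (X ω)) Z = Hcond w X Z := by
  rw [Hcond, Hcond]
  congr 1
  exact Hent_comp_of_injective w (fun ω => (X ω, Z ω)) (hf.prodMap Function.injective_id)

lemma Hcond_pair_le (hw : ∀ ω, 0 ≤ w ω) (U : Ω → A) (V : Ω → B) (Z : Ω → C) :
    Hcond w (fun ω => (U ω, V ω)) Z ≤ Hcond w U Z + Hcond w V Z := by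
  have h := CMI_nonneg w hw U V Z
  have hassoc : Hent w (fun ω => ((U ω, V ω), Z ω)) = Hent w (fun ω => (U ω, V ω, Z ω)) :=
    (Hent_comp_of_injective w (fun ω => ((U ω, V ω), Z ω)) (Equiv.prodAssoc A B C).injective).symm
  rw [CMI] at h
  rw [Hcond, Hcond, Hcond, hassoc]
  linarith

lemma Hcond_le_Hcond_comp (hw : ∀ ω, 0 ≤ w ω) (X : Ω → A) (Z : Ω → B) (g : B → C) :
    Hcond w X Z ≤ Hcond w X (fun ω => g (Z ω)) := by
  have h := CMI_nonneg w hw X Z (fun ω => g (Z ω))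
  have hZ : Hent w (fun ω => (Z ω, g (Z ω))) = Hent w Z :=
    Hent_comp_of_injective w Z (f := fun z => (z, g z)) (Function.LeftInverse.injective
      (g := Prod.fst) fun _ => rfl)
  have hXZ : Hent w (fun ω => (X ω, Z ω, g (Z ω))) = Hent w (fun ω => (X ω, Z ω)) :=
    Hent_comp_of_injective w (fun ω => (X ω, Z ω)) (f := fun p => (p.1, p.2, g p.2))
      (Function.LeftInverse.injective (g := fun q => (q.1, q.2.1)) fun _ => rfl)
  rw [CMI, hZ, hXZ] at h
  rw [Hcond, Hcond]
  linarith

lemma Hcond_pi_le_sum (hw : ∀ ω, 0 ≤ w ω) {n : ℕ} (X : Fin n → Ω → A) (Z : Ω → C) :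
    Hcond w (fun ω t => X t ω) Z ≤ ∑ t, Hcond w (X t) Z := by
  induction n with
  | zero =>
    have hconst : (fun ω (t : Fin 0) => X t ω) = fun _ => Fin.elim0 :=
      funext fun _ => Subsingleton.elim _ _
    simp [hconst, Hcond_const]
  | succ n ih =>
    have hcons : Hcond w (fun ω t => X t ω) Z =
        Hcond w (fun ω => (X 0 ω, fun t : Fin n => X t.succ ω)) Z := by
      rw [← Hcond_comp_of_injective w _ Z (Fin.consEquiv fun _ => A).injective]
      congr with ω t
      cases t using Fin.cases <;> rfl
    rw [hcons, Fin.sum_univ_succ]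
    exact (Hcond_pair_le w hw (X 0) (fun ω (t : Fin n) => X t.succ ω) Z).trans
      (add_le_add_right (ih fun t => X t.succ) _)

lemma Hent_pi_le_sum (hw : IsPMF w) {n : ℕ} (X : Fin n → Ω → A) :
    Hent w (fun ω t => X t ω) ≤ ∑ t, Hent w (X t) := by
  simpa only [Hcond_unit w hw.2] using Hcond_pi_le_sum w hw.1 X (fun _ => ())

lemma sum_Hcond_le_Hcond_pi (hw : IsPMF w) {n : ℕ} (X : Fin n → Ω → A) (E : Fin n → Ω → C)
    (hXE : ∀ v : Fin n → A × C, rvDist w (fun ω t => (X t ω, E t ω)) v =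
      ∏ t, rvDist w (fun ω => (X t ω, E t ω)) (v t)) :
    ∑ t, Hcond w (X t) (E t) ≤ Hcond w (fun ω t => X t ω) (fun ω t => E t ω) := by
  have hpairs : Hent w (fun ω => (fun t => X t ω, fun t => E t ω)) =
      ∑ t, Hent w (fun ω => (X t ω, E t ω)) := by
    rw [← Hent_pi_eq_sum w _ hXE]
    exact Hent_comp_of_injective w (fun ω t => (X t ω, E t ω))
      (f := fun u : Fin n → A × C => (fun t => (u t).1, fun t => (u t).2))
      (Equiv.arrowProdEquivProdArrow (Fin n) (fun _ => A) (fun _ => C)).injective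
  have hE := Hent_pi_le_sum w hw E
  simp only [Hcond, Finset.sum_sub_distrib]
  linarith

end ConditionalEntropy

theorem single_letterization_cond_general {Ω A B C : Type*} [Fintype Ω] [Fintype A] [Fintype B]
    [Fintype C] [DecidableEq A] [DecidableEq B] [DecidableEq C] {n : ℕ}
    (w : Ω → ℝ) (hw : IsPMF w)
    (X : Fin n → Ω → A) (Y : Fin n → Ω → B) (E : Fin n → Ω → C)
    (hXE : IIDFamily w (fun t ω => (X t ω, E t ω))) :
    (1 / (n : ℝ)) * ∑ t, CMI w (X t) (Y t) (E t) ≤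
      (1 / (n : ℝ)) * CMI w (fun ω (t : Fin n) => X t ω) (fun ω (t : Fin n) => Y t ω)
        (fun ω (t : Fin n) => E t ω) := by
  have hX_given_E := sum_Hcond_le_Hcond_pi w hw X E hXE.1
  have hX_given_YE : Hcond w (fun ω t => X t ω) (fun ω => (fun t => Y t ω, fun t => E t ω)) ≤
      ∑ t, Hcond w (X t) (fun ω => (Y t ω, E t ω)) :=
    (Hcond_pi_le_sum w hw.1 X _).trans <| Finset.sum_le_sum fun t _ =>
      Hcond_le_Hcond_comp w hw.1 (X t) (fun ω => (fun t => Y t ω, fun t => E t ω))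
        fun p => (p.1 t, p.2 t)
  simp only [CMI_eq_Hcond_sub_Hcond, Finset.sum_sub_distrib]
  gcongr

/-- if the pairs `(X_t,E_t)` are i.i.d. across `t` and `X_t ⊥ E_t`, then
`(1/n) I(X^n;Y^n|E^n) ≥ (1/n) ∑_t I(X_t;Y_t|E_t)`. -/
theorem single_letterization_cond {Ω A B C : Type*} [Fintype Ω] [Fintype A] [Fintype B]
    [Fintype C] [DecidableEq A] [DecidableEq B] [DecidableEq C] {n : ℕ}
    (w : Ω → ℝ) (hw : IsPMF w)
    (X : Fin n → Ω → A) (Y : Fin n → Ω → B) (E : Fin n → Ω → C)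
    (hXE : IIDFamily w (fun t ω => (X t ω, E t ω)))
    (hindep : ∀ t, IndepRV w (X t) (E t)) :
    (1 / (n : ℝ)) * ∑ t, CMI w (X t) (Y t) (E t) ≤
      (1 / (n : ℝ)) * CMI w (fun ω (t : Fin n) => X t ω) (fun ω (t : Fin n) => Y t ω)
        (fun ω (t : Fin n) => E t ω) :=
  single_letterization_cond_general w hw X Y E hXE
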